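/- Spectral distance via generalized eigenvalues: for symmetric positive definite matrices A, B on ℝⁿ, sup_{u≠0}|ln⟨Au,u⟩ − ln⟨Bu,u⟩| = max{|ln λ| : λ an eigenvalue of B⁻¹A}. -/

import Mathlib

/-!
Write `B = Q²` with `Q = √B` and put `C = Q⁻¹ A Q⁻¹`: it is symmetric, similar to `B⁻¹ A`, and the
substitution `v = Q u` turns `uᵀAu / uᵀBu` into the Rayleigh quotient of `C` at `v`. So the quotients
`uᵀAu / uᵀBu` lie between the least and the greatest generalized eigenvalue and take every
generalized eigenvalue as a value (at its eigenvectors). As `|ln|` is quasiconvex on `(0, ∞)`, its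
supremum over these quotients is attained at an extreme generalized eigenvalue.
-/

theorem csSup_image_eq_of_subset_of_forall_exists_le {α β : Type*}
    [ConditionallyCompleteLattice β] {s t : Set α} {f : α → β} (hst : s ⊆ t)
    (h : ∀ x ∈ t, ∃ y ∈ s, f x ≤ f y) (hs : BddAbove (f '' s)) :
    sSup (f '' t) = sSup (f '' s) := by
  rcases s.eq_empty_or_nonempty with rfl | hne
  · rw [Set.eq_empty_of_forall_notMem (s := t) fun x hx => by simpa using h x hx]
  have hle : ∀ x ∈ t, f x ≤ sSup (f '' s) := fun x hx =>
    let ⟨y, hy, hxy⟩ := h x hx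
    hxy.trans (le_csSup hs (Set.mem_image_of_mem f hy))
  refine le_antisymm (csSup_le ((hne.mono hst).image f) (Set.forall_mem_image.2 hle)) ?_
  exact csSup_le_csSup ⟨_, Set.forall_mem_image.2 hle⟩ (hne.image f) (Set.image_mono hst)

theorem Real.abs_log_le_max_abs_log {a b x : ℝ} (ha : 0 < a) (hax : a ≤ x) (hxb : x ≤ b) :
    |Real.log x| ≤ max |Real.log a| |Real.log b| :=
  abs_le_max_abs_abs (Real.log_le_log ha hax) (Real.log_le_log (ha.trans_le hax) hxb)

namespace Matrix

variable {n : Type*} [Fintype n] [DecidableEq n]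

theorem exists_mulVec_eq_smul_mulVec_of_mem_spectrum_inv_mul {K : Type*} [Field K]
    {A B : Matrix n n K} (hB : IsUnit B) {μ : K} (hμ : μ ∈ spectrum K (B⁻¹ * A)) :
    ∃ v ≠ 0, A *ᵥ v = μ • (B *ᵥ v) := by
  rw [← spectrum_toLin', ← Module.End.hasEigenvalue_iff_mem_spectrum] at hμ
  obtain ⟨v, hv⟩ := hμ.exists_hasEigenvector
  refine ⟨v, hv.2, ?_⟩
  have hBA : B⁻¹ *ᵥ (A *ᵥ v) = μ • v := by simpa using hv.apply_eq_smul
  rw [← mulVec_smul, ← hBA, mulVec_mulVec, mul_nonsing_inv _ ((isUnit_iff_isUnit_det B).mp hB),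
    one_mulVec]

open scoped MatrixOrder in
theorem IsHermitian.mul_dotProduct_le_dotProduct_mulVec {C : Matrix n n ℝ} (hC : C.IsHermitian)
    {r : ℝ} (h : ∀ μ ∈ spectrum ℝ C, r ≤ μ) (v : n → ℝ) : r * (v ⬝ᵥ v) ≤ v ⬝ᵥ C *ᵥ v := by
  have := (le_iff.mp (algebraMap_le_of_le_spectrum h hC.isSelfAdjoint)).dotProduct_mulVec_nonneg v
  simpa [sub_mulVec, Algebra.algebraMap_eq_smul_one, smul_mulVec] using this

open scoped MatrixOrder in
theorem IsHermitian.dotProduct_mulVec_le_mul_dotProduct {C : Matrix n n ℝ} (hC : C.IsHermitian)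
    {r : ℝ} (h : ∀ μ ∈ spectrum ℝ C, μ ≤ r) (v : n → ℝ) : v ⬝ᵥ C *ᵥ v ≤ r * (v ⬝ᵥ v) := by
  have := (le_iff.mp (le_algebraMap_of_spectrum_le h hC.isSelfAdjoint)).dotProduct_mulVec_nonneg v
  simpa [sub_mulVec, Algebra.algebraMap_eq_smul_one, smul_mulVec] using this

theorem IsHermitian.exists_mem_spectrum_bounds_dotProduct_mulVec [Nonempty n]
    {C : Matrix n n ℝ} (hC : C.IsHermitian) (v : n → ℝ) :
    ∃ lo ∈ spectrum ℝ C, ∃ hi ∈ spectrum ℝ C,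
      lo * (v ⬝ᵥ v) ≤ v ⬝ᵥ C *ᵥ v ∧ v ⬝ᵥ C *ᵥ v ≤ hi * (v ⬝ᵥ v) := by
  have hspec := hC.spectrum_real_eq_range_eigenvalues
  obtain ⟨i, hi⟩ := Finite.exists_min hC.eigenvalues
  obtain ⟨j, hj⟩ := Finite.exists_max hC.eigenvalues
  refine ⟨_, hC.eigenvalues_mem_spectrum_real i, _, hC.eigenvalues_mem_spectrum_real j,
    hC.mul_dotProduct_le_dotProduct_mulVec ?_ v, hC.dotProduct_mulVec_le_mul_dotProduct ?_ v⟩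
  all_goals rintro _ hμ; obtain ⟨k, rfl⟩ := hspec ▸ hμ
  exacts [hi k, hj k]

open scoped MatrixOrder in
theorem PosDef.exists_mem_spectrum_inv_mul_bounds_dotProduct_mulVec [Nonempty n]
    {A B : Matrix n n ℝ} (hA : A.IsHermitian) (hB : B.PosDef) (u : n → ℝ) :
    ∃ lo ∈ spectrum ℝ (B⁻¹ * A), ∃ hi ∈ spectrum ℝ (B⁻¹ * A),
      lo * (u ⬝ᵥ B *ᵥ u) ≤ u ⬝ᵥ A *ᵥ u ∧ u ⬝ᵥ A *ᵥ u ≤ hi * (u ⬝ᵥ B *ᵥ u) := by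
  set Q := CFC.sqrt B
  have hQ : Q.IsHermitian := (nonneg_iff_posSemidef.mp (CFC.sqrt_nonneg B)).isHermitian
  have hQQ : Q * Q = B := CFC.sqrt_mul_sqrt_self B hB.posSemidef.nonneg
  have hQunit : IsUnit Q := isUnit_of_mul_isUnit_left (hQQ ▸ hB.isUnit)
  have hQinv : Q * Q⁻¹ = 1 := mul_nonsing_inv Q ((isUnit_iff_isUnit_det Q).mp hQunit)
  have hinvQ : Q⁻¹ * Q = 1 := nonsing_inv_mul Q ((isUnit_iff_isUnit_det Q).mp hQunit)
  set C := Q⁻¹ * A * Q⁻¹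
  have hC : C.IsHermitian := by
    simpa only [hQ.inv.eq] using isHermitian_conjTranspose_mul_mul Q⁻¹ hA
  have hQCQ : Q * C * Q = A := by
    simp only [C, Matrix.mul_assoc, hinvQ, Matrix.mul_one, ← Matrix.mul_assoc Q, hQinv,
      Matrix.one_mul]
  have hquad (M : Matrix n n ℝ) : u ⬝ᵥ (Q * M * Q) *ᵥ u = (Q *ᵥ u) ⬝ᵥ M *ᵥ (Q *ᵥ u) := by
    rw [← mulVec_mulVec, ← mulVec_mulVec, dotProduct_mulVec, ← mulVec_transpose,
      ← conjTranspose_eq_transpose_of_trivial, hQ.eq]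
  have hspec : spectrum ℝ (B⁻¹ * A) = spectrum ℝ C := by
    have : B⁻¹ * A = (↑hQunit.unit⁻¹ : Matrix n n ℝ) * C * hQunit.unit := by
      rw [coe_units_inv, IsUnit.unit_spec, ← hQQ, Matrix.mul_inv_rev]
      simp only [C, Matrix.mul_assoc, hinvQ, Matrix.mul_one]
    rw [this, spectrum.units_conjugate']
  obtain ⟨lo, hlo, hi, hhi, hlow, hupp⟩ := hC.exists_mem_spectrum_bounds_dotProduct_mulVec (Q *ᵥ u)
  have hA' : u ⬝ᵥ A *ᵥ u = (Q *ᵥ u) ⬝ᵥ C *ᵥ (Q *ᵥ u) := by rw [← hquad, hQCQ]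
  have hB' : u ⬝ᵥ B *ᵥ u = (Q *ᵥ u) ⬝ᵥ (Q *ᵥ u) := by simpa [hQQ] using hquad 1
  rw [hspec, hA', hB']
  exact ⟨lo, hlo, hi, hhi, hlow, hupp⟩

end Matrix

open Matrix in
/-- Spectral distance via generalized eigenvalues: for symmetric positive
definite matrices `A, B`, `sup_{u≠0} |ln(uᵀAu) − ln(uᵀBu)|` equals the maximum of
`|ln λ|` over the eigenvalues `λ` of `B⁻¹A`. -/
theorem spectral_distance_eq_max_generalized_eigenvalue
    {n : ℕ} (A B : Matrix (Fin n) (Fin n) ℝ)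
    (hA : A.PosDef) (hB : B.PosDef) :
    (⨆ u : {u : Fin n → ℝ // u ≠ 0},
        |Real.log (u.1 ⬝ᵥ A.mulVec u.1) - Real.log (u.1 ⬝ᵥ B.mulVec u.1)|) =
      sSup ((fun μ => |Real.log μ|) '' spectrum ℝ (B⁻¹ * A)) := by
  have hquad_pos {M : Matrix (Fin n) (Fin n) ℝ} (hM : M.PosDef) (u : {u : Fin n → ℝ // u ≠ 0}) :
      0 < u.1 ⬝ᵥ M *ᵥ u.1 := by
    simpa using hM.dotProduct_mulVec_pos u.2
  set ρ : {u : Fin n → ℝ // u ≠ 0} → ℝ := fun u => (u.1 ⬝ᵥ A *ᵥ u.1) / (u.1 ⬝ᵥ B *ᵥ u.1)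
  have hρ_pos (u) : 0 < ρ u := div_pos (hquad_pos hA u) (hquad_pos hB u)
  have hlog (u : {u : Fin n → ℝ // u ≠ 0}) :
      |Real.log (u.1 ⬝ᵥ A *ᵥ u.1) - Real.log (u.1 ⬝ᵥ B *ᵥ u.1)| = |Real.log (ρ u)| := by
    rw [← Real.log_div (hquad_pos hA u).ne' (hquad_pos hB u).ne']
  have hspec_sub : spectrum ℝ (B⁻¹ * A) ⊆ Set.range ρ := fun μ hμ => by
    obtain ⟨v, hv, hAv⟩ := exists_mulVec_eq_smul_mulVec_of_mem_spectrum_inv_mul hB.isUnit hμ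
    refine ⟨⟨v, hv⟩, ?_⟩
    simp only [ρ, hAv, dotProduct_smul, smul_eq_mul]
    exact mul_div_cancel_right₀ μ (hquad_pos hB ⟨v, hv⟩).ne'
  simp_rw [hlog, iSup, Set.range_comp' (fun r => |Real.log r|) ρ]
  refine csSup_image_eq_of_subset_of_forall_exists_le hspec_sub ?_
    (finite_real_spectrum.image _).bddAbove
  rintro _ ⟨u, rfl⟩
  have : Nonempty (Fin n) := let ⟨i, _⟩ := Function.ne_iff.mp u.2; ⟨i⟩
  obtain ⟨lo, hlo, hi, hhi, hlow, hupp⟩ :=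
    hB.exists_mem_spectrum_inv_mul_bounds_dotProduct_mulVec hA.isHermitian u.1
  have hlo_pos : 0 < lo := by obtain ⟨w, rfl⟩ := hspec_sub hlo; exact hρ_pos w
  have hBu := hquad_pos hB u
  rcases le_max_iff.mp (Real.abs_log_le_max_abs_log hlo_pos ((le_div_iff₀ hBu).mpr hlow)
    ((div_le_iff₀ hBu).mpr hupp)) with h | h
  exacts [⟨lo, hlo, h⟩, ⟨hi, hhi, h⟩]
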